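/- For any nonzero x ∈ ℂ^n and any λ ∈ ℂ satisfying λ²·x*Mx + λ·x*Cx + x*Kx = 0, one has Re λ ≤ γ; i.e., γ is an upper bound for the real part of the numerical range of the quadratic matrix pencil K(λ). -/

import Mathlib

open Matrix
open scoped ComplexOrder

noncomputable section

/-- The value `x* P x` (which is real for Hermitian `P`), taken as its real part. -/
def qf {n : ℕ} (P : Matrix (Fin n) (Fin n) ℂ) (x : Fin n → ℂ) : ℝ :=
  (star x ⬝ᵥ P.mulVec x).re

/-- The (positive semidefinite) square root of a positive semidefinite matrix,
extended by `0` to all matrices. -/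
def msqrt {n : ℕ} (P : Matrix (Fin n) (Fin n) ℂ) : Matrix (Fin n) (Fin n) ℂ :=
  open scoped Classical in
  if h : P.PosSemidef then
    (h.1.eigenvectorUnitary : Matrix (Fin n) (Fin n) ℂ) *
      diagonal ((fun r : ℝ => (r : ℂ)) ∘ Real.sqrt ∘ h.1.eigenvalues) *
      (star h.1.eigenvectorUnitary : Matrix (Fin n) (Fin n) ℂ)
  else 0

/-- The quadratic matrix pencil `K(λ) = λ²M + λC + K`. -/
def Kpen {n : ℕ} (M C K : Matrix (Fin n) (Fin n) ℂ) (lam : ℂ) :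
    Matrix (Fin n) (Fin n) ℂ :=
  lam ^ 2 • M + lam • C + K

/-- The real part of the `+`-root of the scalar quadratic
`m(x) λ² + c(x) λ + k(x) = 0`. -/
def rfun {n : ℕ} (M C K : Matrix (Fin n) (Fin n) ℂ) (x : Fin n → ℂ) : ℝ :=
  open scoped Classical in
  if (qf C x) ^ 2 ≥ 4 * qf M x * qf K x then
    (-(qf C x) + Real.sqrt ((qf C x) ^ 2 - 4 * qf M x * qf K x)) / (2 * qf M x)
  else
    -(qf C x) / (2 * qf M x)

/-- The spectral-shift bound `γ = sup_{x ≠ 0} Re p₊(x)`. -/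
def gam {n : ℕ} (M C K : Matrix (Fin n) (Fin n) ℂ) : ℝ :=
  sSup {y : ℝ | ∃ x : Fin n → ℂ, x ≠ 0 ∧ rfun M C K x = y}

/-- The phase-space matrix `A = [[0, K½ M⁻½], [−M⁻½ K½, −M⁻½ C M⁻½]]`. -/
def phaseA {n : ℕ} (M C K : Matrix (Fin n) (Fin n) ℂ) :
    Matrix (Fin n ⊕ Fin n) (Fin n ⊕ Fin n) ℂ :=
  fromBlocks 0 (msqrt K * (msqrt M)⁻¹)
    (-((msqrt M)⁻¹ * msqrt K)) (-((msqrt M)⁻¹ * C * (msqrt M)⁻¹))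

/-- The operator norm of a matrix with respect to the Euclidean norm. -/
def opNorm {m : Type*} [Fintype m] [DecidableEq m] (A : Matrix m m ℂ) : ℝ :=
  ‖toEuclideanCLM (𝕜 := ℂ) A‖

/-- The block matrix `L(μ) = [[K½ K(μ)⁻½, 0], [μ M½ K(μ)⁻½, I]]`. -/
def Lmat {n : ℕ} (M C K : Matrix (Fin n) (Fin n) ℂ) (mu : ℝ) :
    Matrix (Fin n ⊕ Fin n) (Fin n ⊕ Fin n) ℂ :=
  fromBlocks (msqrt K * (msqrt (Kpen M C K (mu : ℂ)))⁻¹) 0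
    ((mu : ℂ) • (msqrt M * (msqrt (Kpen M C K (mu : ℂ)))⁻¹)) 1

/-!
If `x*K(λ)x = 0` then `λ` is a root of the scalar quadratic `m λ² + c λ + k` with `m = x*Mx > 0`
and `c, k` real. A non-real root has real part `-c/(2m)`, a real root is at most the larger root
`(-c + √(c² - 4mk))/(2m)`; either way `Re λ ≤ r(x)`. Since `m, c, k ≥ 0` forces `r(x) ≤ 0`, the set
of values `r(x)` is bounded above, so `γ` is its true supremum and `r(x) ≤ γ`.
-/

lemma Complex.re_eq_of_quadratic_eq_zero_of_im_ne_zero {m c k : ℝ} (hm : m ≠ 0) {z : ℂ}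
    (hz : z.im ≠ 0) (h : (m : ℂ) * (z * z) + c * z + k = 0) : z.re = -c / (2 * m) := by
  have him := congrArg Complex.im h
  simp only [Complex.add_im, Complex.mul_im, Complex.ofReal_re, Complex.ofReal_im,
    Complex.zero_im, zero_mul, add_zero] at him
  have hvertex : z.im * (2 * m * z.re + c) = 0 := by linear_combination him
  rw [eq_div_iff (by positivity)]
  linarith [(mul_eq_zero.mp hvertex).resolve_left hz]

lemma le_quadratic_root_of_eq_zero {m c k a : ℝ} (hm : 0 < m) (h : m * (a * a) + c * a + k = 0) :
    4 * m * k ≤ c ^ 2 ∧ a ≤ (-c + √(c ^ 2 - 4 * m * k)) / (2 * m) := by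
  have hsq := discrim_eq_sq_of_quadratic_eq_zero h
  unfold discrim at hsq
  refine ⟨by nlinarith [sq_nonneg (2 * m * a + c)], ?_⟩
  rw [le_div_iff₀ (by positivity), hsq, Real.sqrt_sq_eq_abs]
  linarith [le_abs_self (2 * m * a + c)]

namespace Matrix

variable {n : ℕ} {P M C K : Matrix (Fin n) (Fin n) ℂ} {x : Fin n → ℂ}

lemma IsHermitian.ofReal_qf (hP : P.IsHermitian) (x : Fin n → ℂ) :
    (qf P x : ℂ) = star x ⬝ᵥ P *ᵥ x :=
  Complex.ext rfl (by simpa using (hP.im_star_dotProduct_mulVec_self x).symm)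

lemma PosSemidef.qf_nonneg (hP : P.PosSemidef) (x : Fin n → ℂ) : 0 ≤ qf P x :=
  hP.re_dotProduct_nonneg x

lemma PosDef.qf_pos (hP : P.PosDef) (hx : x ≠ 0) : 0 < qf P x :=
  hP.re_dotProduct_pos hx

lemma star_dotProduct_kpen_mulVec (hM : M.IsHermitian) (hC : C.IsHermitian)
    (hK : K.IsHermitian) (x : Fin n → ℂ) (lam : ℂ) :
    star x ⬝ᵥ Kpen M C K lam *ᵥ x = qf M x * (lam * lam) + qf C x * lam + qf K x := by
  rw [hM.ofReal_qf, hC.ofReal_qf, hK.ofReal_qf, Kpen, add_mulVec, add_mulVec, smul_mulVec,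
    smul_mulVec, dotProduct_add, dotProduct_add, dotProduct_smul, dotProduct_smul, smul_eq_mul,
    smul_eq_mul, sq]
  ring

lemma neg_div_le_rfun (hM : M.PosSemidef) (x : Fin n → ℂ) :
    -qf C x / (2 * qf M x) ≤ rfun M C K x := by
  have hm := hM.qf_nonneg x
  unfold rfun
  split_ifs
  · gcongr
    exact le_add_of_nonneg_right (Real.sqrt_nonneg _)
  · rfl

lemma rfun_nonpos (hM : M.PosSemidef) (hC : C.PosSemidef) (hK : K.PosSemidef)
    (x : Fin n → ℂ) : rfun M C K x ≤ 0 := by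
  have hm := hM.qf_nonneg x
  have hc := hC.qf_nonneg x
  have hk := hK.qf_nonneg x
  unfold rfun
  split_ifs
  · refine div_nonpos_of_nonpos_of_nonneg ?_ (by positivity)
    have hsqrt : √(qf C x ^ 2 - 4 * qf M x * qf K x) ≤ qf C x :=
      Real.sqrt_le_iff.mpr ⟨hc, by nlinarith [mul_nonneg hm hk]⟩
    linarith
  · exact div_nonpos_of_nonpos_of_nonneg (by linarith) (by positivity)

lemma re_le_rfun (hM : M.PosDef) (hC : C.IsHermitian) (hK : K.IsHermitian) (hx : x ≠ 0)
    {lam : ℂ} (h : star x ⬝ᵥ Kpen M C K lam *ᵥ x = 0) : lam.re ≤ rfun M C K x := by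
  have hm := hM.qf_pos hx
  rw [star_dotProduct_kpen_mulVec hM.isHermitian hC hK] at h
  by_cases hreal : lam.im = 0
  · have hroot : qf M x * (lam.re * lam.re) + qf C x * lam.re + qf K x = 0 := by
      rw [← Complex.re_add_im lam, hreal] at h
      simp only [Complex.ofReal_zero, zero_mul, add_zero] at h
      exact_mod_cast h
    obtain ⟨hdisc, hle⟩ := le_quadratic_root_of_eq_zero hm hroot
    rwa [rfun, if_pos hdisc]
  · rw [Complex.re_eq_of_quadratic_eq_zero_of_im_ne_zero hm.ne' hreal h]
    exact neg_div_le_rfun hM.posSemidef x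

end Matrix

theorem numericalRange_re_le_gamma_general {n : ℕ}
    (M C K : Matrix (Fin n) (Fin n) ℂ)
    (hM : M.PosDef) (hC : C.PosDef) (hK : K.PosDef) :
    ∀ x : Fin n → ℂ, x ≠ 0 → ∀ lam : ℂ,
      star x ⬝ᵥ (Kpen M C K lam).mulVec x = 0 → lam.re ≤ gam M C K := by
  intro x hx lam h
  have hbdd : BddAbove {y : ℝ | ∃ x : Fin n → ℂ, x ≠ 0 ∧ rfun M C K x = y} := by
    refine ⟨0, ?_⟩
    rintro y ⟨z, -, rfl⟩
    exact rfun_nonpos hM.posSemidef hC.posSemidef hK.posSemidef z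
  calc lam.re ≤ rfun M C K x := re_le_rfun hM hC.isHermitian hK.isHermitian hx h
    _ ≤ gam M C K := le_csSup hbdd ⟨x, hx, rfl⟩

/-- `γ` bounds the real part of the numerical range of the pencil `K(λ)`:
if `x ≠ 0` and `x* K(λ) x = 0`, then `Re λ ≤ γ`. -/
theorem numericalRange_re_le_gamma {n : ℕ} (hn : 1 ≤ n)
    (M C K : Matrix (Fin n) (Fin n) ℂ)
    (hM : M.PosDef) (hC : C.PosDef) (hK : K.PosDef) :
    ∀ x : Fin n → ℂ, x ≠ 0 → ∀ lam : ℂ,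
      star x ⬝ᵥ (Kpen M C K lam).mulVec x = 0 → lam.re ≤ gam M C K :=
  numericalRange_re_le_gamma_general M C K hM hC hK

end
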